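/- arXiv:2101.07077 — 4 statements merged into one kernel-verified Lean document; each statement's English description precedes it below -/
import Mathlib

section
/- Define the bitvector of an internal node n of a full binary tree (with leaves numbered 1..L in left-to-right order) as the Boolean vector of length L that has 0 exactly in the positions of the leaves in the left subtree of n, and 1 elsewhere. Then a bitvector b of an internal node and its complement 1⃗ − b cannot both occur as bitvectors of internal nodes of the same full binary tree. -/
/-- Full binary tree: every node is a leaf or has exactly two children. -/
inductive BTree : Type
  | leaf : BTree
  | node (l r : BTree) : BTree

namespace BTree

/-- Number of leaves. -/
def numLeaves : BTree → ℕ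
  | leaf => 1
  | node l r => numLeaves l + numLeaves r

/-- Number of internal (non-leaf) nodes. -/
def internals : BTree → ℕ
  | leaf => 0
  | node l r => internals l + internals r + 1

/-- Total number of nodes. -/
def size : BTree → ℕ
  | leaf => 1
  | node l r => 1 + size l + size r

/-- Depth, with the depth of a single leaf being 1. -/
def depth : BTree → ℕ
  | leaf => 1
  | node l r => 1 + max (depth l) (depth r)

/-- The subtree at a path (`false` = go left, `true` = go right), if it exists. -/
def subtreeAt? : BTree → List Bool → Option BTree
  | t, [] => some t
  | leaf, _ :: _ => none
  | node l r, b :: p => if b then subtreeAt? r p else subtreeAt? l p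

/-- Number of leaves strictly to the left of the subtree at the given path. -/
def offsetAt : BTree → List Bool → ℕ
  | _, [] => 0
  | leaf, _ :: _ => 0
  | node l r, b :: p => if b then l.numLeaves + offsetAt r p else offsetAt l p

/-- A path denotes an internal node iff the subtree there is a `node`. -/
def isInternal (t : BTree) (p : List Bool) : Prop :=
  ∃ l r, t.subtreeAt? p = some (node l r)

/-- The set of (left-to-right) indices of the leaves of a tree whose leftmost
leaf has global index `off`. -/
def leafIdxSet : BTree → ℕ → Finset ℕ
  | leaf, off => {off}
  | node l r, off => leafIdxSet l off ∪ leafIdxSet r (off + l.numLeaves)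

/-- The set of leaf indices of the left subtree of the internal node at path `p`,
i.e. the zero positions of its bitvector. -/
def zeroSet (t : BTree) (p : List Bool) : Finset ℕ :=
  match t.subtreeAt? p with
  | some (node l _) => leafIdxSet l (t.offsetAt p)
  | _ => ∅

/-- The bitvector of the internal node at path `p`: 0 exactly at the positions of
the leaves of its left subtree, 1 elsewhere. -/
def bitvec (t : BTree) (p : List Bool) (i : ℕ) : ℤ :=
  if i ∈ t.zeroSet p then 0 else 1

/-- The set of leaf indices of the whole subtree rooted at path `p`. -/
def subtreeLeafSet (t : BTree) (p : List Bool) : Finset ℕ :=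
  match t.subtreeAt? p with
  | some s => leafIdxSet s (t.offsetAt p)
  | none => ∅

end BTree

lemma BTree.one_le_numLeaves (t : BTree) : 1 ≤ t.numLeaves := by
  induction t with
  | leaf => simp [BTree.numLeaves]
  | node l r hl hr => simp [BTree.numLeaves]; omega

lemma BTree.leafIdxSet_eq (t : BTree) (off : ℕ) :
    t.leafIdxSet off = Finset.Ico off (off + t.numLeaves) := by
  induction t generalizing off with
  | leaf => simp [BTree.leafIdxSet, BTree.numLeaves]
  | node l r hl hr =>
    rw [BTree.leafIdxSet, BTree.numLeaves, hl, hr,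
      Finset.Ico_union_Ico_eq_Ico (by omega) (by omega)]
    ring_nf

lemma BTree.subtree_bound (p : List Bool) (t s : BTree)
    (h : t.subtreeAt? p = some s) :
    t.offsetAt p + s.numLeaves ≤ t.numLeaves := by
  induction p generalizing t with
  | nil =>
    simp [BTree.subtreeAt?] at h
    subst h
    simp [BTree.offsetAt]
  | cons b bs ih =>
    cases t with
    | leaf => simp [BTree.subtreeAt?] at h
    | node l r =>
      cases b with
      | false =>
        simp [BTree.subtreeAt?, BTree.offsetAt] at h ⊢
        have := ih l h
        simp [BTree.numLeaves]; omega
      | true =>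
        simp [BTree.subtreeAt?, BTree.offsetAt] at h ⊢
        have := ih r h
        simp [BTree.numLeaves]; omega

lemma BTree.zeroSet_lt (t : BTree) (p : List Bool) (hp : t.isInternal p)
    {i : ℕ} (hi : i ∈ t.zeroSet p) : i + 1 < t.numLeaves := by
  obtain ⟨l, r, h⟩ := hp
  have hb := BTree.subtree_bound p t (BTree.node l r) h
  rw [BTree.zeroSet, h] at hi
  simp only [BTree.leafIdxSet_eq, Finset.mem_Ico] at hi
  rw [BTree.numLeaves] at hb
  have := r.one_le_numLeaves
  omega

/-- A bitvec of an internal node and the complement of a bitvector of an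
internal node cannot both occur in the same full binary tree: for internal nodes
`p, q`, it is not the case that `bitvec p = 1⃗ - bitvec q` coordinatewise. -/
theorem stmt6 (t : BTree) (p q : List Bool)
    (hp : t.isInternal p) (hq : t.isInternal q) :
    ¬ ∀ i : ℕ, i < t.numLeaves → t.bitvec p i = 1 - t.bitvec q i := by
  intro h
  have hL := t.one_le_numLeaves
  have hi : t.numLeaves - 1 < t.numLeaves := by omega
  have heq := h _ hi
  unfold BTree.bitvec at heq
  by_cases h1 : t.numLeaves - 1 ∈ t.zeroSet p
  · have := BTree.zeroSet_lt t p hp h1; omega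
  · by_cases h2 : t.numLeaves - 1 ∈ t.zeroSet q
    · have := BTree.zeroSet_lt t q hq h2; omega
    · simp [h1, h2] at heq
end

section
/- With bitvectors as defined for internal nodes of a full binary tree with L leaves and L−1 internal nodes, the L × (L−1) bitvector matrix B (whose columns are the internal-node bitvectors) has full column rank over the rationals (equivalently, over the reals). -/
namespace BTree

lemma leafIdxSet_eq_Ico (t : BTree) (off : ℕ) :
    t.leafIdxSet off = Finset.Ico off (off + t.numLeaves) := by
  induction t generalizing off with
  | leaf => ext i; simp [leafIdxSet, numLeaves]
  | node l r ihl ihr =>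
    ext i
    simp only [leafIdxSet, ihl, ihr, numLeaves, Finset.mem_union, Finset.mem_Ico]
    omega

lemma bitvec_leaf (p : List Bool) (i : ℕ) : leaf.bitvec p i = 1 := by
  cases p <;> rfl

lemma bitvec_node_nil (l r : BTree) (i : ℕ) :
    (node l r).bitvec [] i = if i < l.numLeaves then 0 else 1 := by
  simp [bitvec, zeroSet, subtreeAt?, offsetAt, leafIdxSet_eq_Ico]

lemma bitvec_node_cons_false (l r : BTree) (p : List Bool) (i : ℕ) :
    (node l r).bitvec (false :: p) i = l.bitvec p i := rfl

lemma mem_zeroSet_node_cons_true (l r : BTree) (q : List Bool) (i : ℕ) :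
    i ∈ (node l r).zeroSet (true :: q) ↔
      l.numLeaves ≤ i ∧ i - l.numLeaves ∈ r.zeroSet q := by
  simp only [zeroSet, subtreeAt?, offsetAt, if_true]
  rcases r.subtreeAt? q with _ | _ | ⟨a, b⟩ <;> simp [leafIdxSet_eq_Ico]
  omega

lemma bitvec_node_cons_true (l r : BTree) (q : List Bool) (i : ℕ) :
    (node l r).bitvec (true :: q) i =
      if i < l.numLeaves then 1 else r.bitvec q (i - l.numLeaves) := by
  by_cases hi : i < l.numLeaves <;> simp [bitvec, mem_zeroSet_node_cons_true, hi, le_of_not_gt]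

lemma bitvec_of_numLeaves_le (t : BTree) (p : List Bool) {i : ℕ} (hi : t.numLeaves ≤ i) :
    t.bitvec p i = 1 := by
  induction t generalizing p i with
  | leaf => exact bitvec_leaf p i
  | node l r ihl ihr =>
    simp only [numLeaves] at hi
    rcases p with _ | ⟨_ | _, q⟩
    · simp [bitvec_node_nil, show ¬ i < l.numLeaves by omega]
    · exact ihl q (by omega)
    · rw [bitvec_node_cons_true, if_neg (by omega)]
      exact ihr q (by omega)

lemma not_isInternal_leaf (p : List Bool) : ¬ leaf.isInternal p := by
  rintro ⟨a, b, h⟩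
  cases p <;> simp [subtreeAt?] at h

lemma isInternal_node_nil (l r : BTree) : (node l r).isInternal [] := ⟨l, r, rfl⟩

lemma isInternal_node_cons (l r : BTree) (b : Bool) (p : List Bool) :
    (node l r).isInternal (b :: p) ↔ (if b then r else l).isInternal p := by
  cases b <;> rfl

def internalPaths : BTree → Finset (List Bool)
  | leaf => ∅
  | node l r => insert [] (l.internalPaths.map ⟨(false :: ·), List.cons_injective⟩ ∪
      r.internalPaths.map ⟨(true :: ·), List.cons_injective⟩)

lemma mem_internalPaths (t : BTree) (p : List Bool) :
    p ∈ t.internalPaths ↔ t.isInternal p := by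
  induction t generalizing p with
  | leaf => simp [internalPaths, not_isInternal_leaf]
  | node l r ihl ihr =>
    rcases p with _ | ⟨_ | _, q⟩ <;>
      simp [internalPaths, isInternal_node_nil, isInternal_node_cons, ihl, ihr]

lemma sum_internalPaths_node {M : Type*} [AddCommMonoid M] (l r : BTree)
    (f : List Bool → M) :
    ∑ p ∈ (node l r).internalPaths, f p =
      f [] + ∑ p ∈ l.internalPaths, f (false :: p) +
        ∑ q ∈ r.internalPaths, f (true :: q) := by
  rw [internalPaths, Finset.sum_insert (by simp), Finset.sum_union, Finset.sum_map,
    Finset.sum_map, add_assoc]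
  · rfl
  · simp [Finset.disjoint_left]

lemma sum_mul_bitvec_node_of_lt (l r : BTree) (c : List Bool → ℚ) {i : ℕ}
    (hi : i < l.numLeaves) :
    ∑ p ∈ (node l r).internalPaths, c p * (node l r).bitvec p i =
      ∑ p ∈ l.internalPaths, c (false :: p) * l.bitvec p i +
        ∑ q ∈ r.internalPaths, c (true :: q) := by
  simp [sum_internalPaths_node, bitvec_node_nil, bitvec_node_cons_false, bitvec_node_cons_true,
    hi]

lemma sum_mul_bitvec_node_add (l r : BTree) (c : List Bool → ℚ) (j : ℕ) :
    ∑ p ∈ (node l r).internalPaths, c p * (node l r).bitvec p (l.numLeaves + j) =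
      ∑ q ∈ r.internalPaths, c (true :: q) * r.bitvec q j +
        (c [] + ∑ p ∈ l.internalPaths, c (false :: p)) := by
  simp [sum_internalPaths_node, bitvec_node_nil, bitvec_node_cons_false, bitvec_node_cons_true,
    bitvec_of_numLeaves_le l _ (Nat.le_add_right _ j)]
  ring

lemma eq_zero_of_sum_mul_bitvec_add_eq_zero (t : BTree) (c : List Bool → ℚ) (d : ℚ)
    (h : ∀ i < t.numLeaves, ∑ p ∈ t.internalPaths, c p * t.bitvec p i + d = 0) :
    d = 0 ∧ ∀ p ∈ t.internalPaths, c p = 0 := by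
  induction t generalizing c d with
  | leaf => simpa [internalPaths] using h 0 (by simp [numLeaves])
  | node l r ihl ihr =>
    have hl : ∀ i < l.numLeaves, ∑ p ∈ l.internalPaths, c (false :: p) * l.bitvec p i +
        (∑ q ∈ r.internalPaths, c (true :: q) + d) = 0 := fun i hi => by
      rw [← add_assoc, ← sum_mul_bitvec_node_of_lt l r c hi]
      exact h i (by simp only [numLeaves]; omega)
    have hr : ∀ j < r.numLeaves, ∑ q ∈ r.internalPaths, c (true :: q) * r.bitvec q j +
        (c [] + ∑ p ∈ l.internalPaths, c (false :: p) + d) = 0 := fun j hj => by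
      rw [← add_assoc, ← sum_mul_bitvec_node_add]
      exact h _ (by simp only [numLeaves]; omega)
    obtain ⟨hdl, hcl⟩ := ihl _ _ hl
    obtain ⟨hdr, hcr⟩ := ihr _ _ hr
    rw [Finset.sum_eq_zero hcr] at hdl
    rw [Finset.sum_eq_zero hcl] at hdr
    have hroot : c [] = 0 := by linarith
    refine ⟨by linarith, fun p hp => ?_⟩
    rcases p with _ | ⟨_ | _, q⟩
    · exact hroot
    · exact hcl q (by simpa [mem_internalPaths, isInternal_node_cons] using hp)
    · exact hcr q (by simpa [mem_internalPaths, isInternal_node_cons] using hp)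

end BTree

/-- The bitvectors of the internal nodes of a full binary tree, viewed as vectors
in `ℚ^L` (`L` = number of leaves), are linearly independent; i.e. the bitvector
matrix has full column rank over the rationals. -/
theorem stmt7 (t : BTree) :
    LinearIndependent ℚ (fun p : {p : List Bool // t.isInternal p} =>
      fun i : Fin t.numLeaves => (t.bitvec p.1 i : ℚ)) := by
  have hpaths : {p | t.isInternal p} = ↑t.internalPaths := by
    ext p
    simp [BTree.mem_internalPaths]
  change LinearIndepOn ℚ (fun p (i : Fin t.numLeaves) => (t.bitvec p i : ℚ))
    {p | t.isInternal p}
  rw [hpaths, linearIndepOn_finset_iff]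
  intro c hc p hp
  refine (t.eq_zero_of_sum_mul_bitvec_add_eq_zero c 0 fun i hi => ?_).2 p hp
  simpa using congrFun hc ⟨i, hi⟩
end

section
/- With the bitvector matrix B of a full binary tree with L leaves (B is L × (L−1)), the L × L augmented matrix (B | 1⃗) obtained by appending the all-ones column is invertible over the rationals. -/
namespace BTree

lemma one_le_numLeaves_s8 (t : BTree) : 1 ≤ t.numLeaves := by
  induction t with
  | leaf => simp [numLeaves]
  | node l r ihl ihr => simp only [numLeaves]; omega

lemma subtreeAt?_append (t : BTree) (p q : List Bool) :
    t.subtreeAt? (p ++ q) = (t.subtreeAt? p).bind (fun s => s.subtreeAt? q) := by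
  induction p generalizing t with
  | nil => simp [subtreeAt?]
  | cons b p ih => cases t <;> cases b <;> simp [subtreeAt?, ih]

lemma offsetAt_append (t : BTree) (p q : List Bool) (s : BTree)
    (h : t.subtreeAt? p = some s) :
    t.offsetAt (p ++ q) = t.offsetAt p + s.offsetAt q := by
  induction p generalizing t with
  | nil =>
      simp only [subtreeAt?, Option.some.injEq] at h
      subst h; simp [offsetAt]
  | cons b p ih =>
      cases t with
      | leaf => simp [subtreeAt?] at h
      | node l r =>
          cases b <;> simp only [subtreeAt?, if_true, if_false, Bool.false_eq_true] at h <;>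
            simp only [offsetAt, List.cons_append, if_true, if_false, Bool.false_eq_true,
              List.append_eq] <;>
            rw [ih _ h] <;> omega

end BTree

/-- The `L × L` augmented matrix `(B | 1⃗)`, whose first `L - 1` columns are the
bitvectors of the internal nodes (under any enumeration) and whose last column is
the all-ones vector, is invertible over `ℚ`. -/
theorem stmt8 (t : BTree) (L : ℕ) (hL : t.numLeaves = L)
    (e : Fin (L - 1) → List Bool)
    (he : ∀ j, t.isInternal (e j))
    (hbij : ∀ p, t.isInternal p → ∃! j, e j = p)
    (M : Matrix (Fin L) (Fin L) ℚ)
    (hM : ∀ (i j : Fin L),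
      M i j = if h : (j : ℕ) < L - 1 then (t.bitvec (e ⟨j, h⟩) (i : ℕ) : ℚ) else 1) :
    M.det ≠ 0 := by
  subst hL
  have hL1 : 1 ≤ t.numLeaves := t.one_le_numLeaves_s8
  set R := LinearMap.range M.mulVecLin with hRdef
  -- the all-ones column is in the range
  have hone : (fun _ : Fin t.numLeaves => (1 : ℚ)) ∈ R := by
    refine ⟨Pi.single ⟨t.numLeaves - 1, by omega⟩ 1, ?_⟩
    rw [Matrix.mulVecLin_apply, Matrix.mulVec_single]
    funext i
    rw [Pi.smul_apply, Matrix.col_apply, MulOpposite.smul_eq_mul_unop, MulOpposite.unop_op]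
    rw [hM, dif_neg (by simp), mul_one]
  -- the bitvector columns are in the range
  have hcol : ∀ (p : List Bool), t.isInternal p →
      (fun i : Fin t.numLeaves => if (i : ℕ) ∈ t.zeroSet p then (0 : ℚ) else 1) ∈ R := by
    intro p hp
    obtain ⟨j, hj, -⟩ := hbij p hp
    refine ⟨Pi.single ⟨(j : ℕ), by omega⟩ 1, ?_⟩
    rw [Matrix.mulVecLin_apply, Matrix.mulVec_single]
    funext i
    rw [Pi.smul_apply, Matrix.col_apply, MulOpposite.smul_eq_mul_unop, MulOpposite.unop_op]
    rw [hM, dif_pos (show ((⟨(j : ℕ), by omega⟩ : Fin t.numLeaves) : ℕ) < t.numLeaves - 1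
      from j.isLt), mul_one]
    have : (⟨((⟨(j : ℕ), by omega⟩ : Fin t.numLeaves) : ℕ), j.isLt⟩ : Fin (t.numLeaves - 1)) = j := by
      apply Fin.ext; rfl
    rw [this, hj, BTree.bitvec]
    split_ifs <;> simp
  -- main induction: from the indicator of the leaf interval of a subtree, get all
  -- standard basis vectors supported on it
  have key : ∀ (s : BTree) (p : List Bool), t.subtreeAt? p = some s →
      (fun k : Fin t.numLeaves =>
        if t.offsetAt p ≤ (k : ℕ) ∧ (k : ℕ) < t.offsetAt p + s.numLeaves then (1 : ℚ) else 0) ∈ R →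
      ∀ i : ℕ, t.offsetAt p ≤ i → i < t.offsetAt p + s.numLeaves →
      (fun k : Fin t.numLeaves => if (k : ℕ) = i then (1 : ℚ) else 0) ∈ R := by
    intro s
    induction s with
    | leaf =>
        intro p hp hchi i hi1 hi2
        simp only [BTree.numLeaves] at hi2
        have hie : i = t.offsetAt p := by omega
        subst hie
        have heq : (fun k : Fin t.numLeaves =>
            if t.offsetAt p ≤ (k : ℕ) ∧ (k : ℕ) < t.offsetAt p + BTree.leaf.numLeaves
            then (1 : ℚ) else 0)
            = (fun k : Fin t.numLeaves => if (k : ℕ) = t.offsetAt p then (1 : ℚ) else 0) := by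
          funext k
          simp only [BTree.numLeaves]
          exact if_congr (by omega) rfl rfl
        rw [heq] at hchi
        exact hchi
    | node l r ihl ihr =>
        intro p hp hchi i hi1 hi2
        simp only [BTree.numLeaves] at hi2
        have hint : t.isInternal p := ⟨l, r, hp⟩
        have hcolp := hcol p hint
        have hzero : t.zeroSet p = Finset.Ico (t.offsetAt p) (t.offsetAt p + l.numLeaves) := by
          unfold BTree.zeroSet
          rw [hp]
          exact BTree.leafIdxSet_eq_Ico l _
        -- indicator of left subtree leaves
        have hleft : (fun k : Fin t.numLeaves =>
            if t.offsetAt p ≤ (k : ℕ) ∧ (k : ℕ) < t.offsetAt p + l.numLeaves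
            then (1 : ℚ) else 0) ∈ R := by
          have hmem := R.sub_mem hone hcolp
          have heq : (fun k : Fin t.numLeaves =>
              if t.offsetAt p ≤ (k : ℕ) ∧ (k : ℕ) < t.offsetAt p + l.numLeaves
              then (1 : ℚ) else 0)
              = (fun _ : Fin t.numLeaves => (1 : ℚ)) -
                (fun i : Fin t.numLeaves => if (i : ℕ) ∈ t.zeroSet p then (0 : ℚ) else 1) := by
            funext k
            simp only [Pi.sub_apply, hzero, Finset.mem_Ico]
            split_ifs <;> norm_num
          rw [heq]; exact hmem
        -- indicator of right subtree leaves
        have hright : (fun k : Fin t.numLeaves =>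
            if t.offsetAt p + l.numLeaves ≤ (k : ℕ) ∧
              (k : ℕ) < t.offsetAt p + l.numLeaves + r.numLeaves
            then (1 : ℚ) else 0) ∈ R := by
          have hmem := R.sub_mem hchi hleft
          have heq : (fun k : Fin t.numLeaves =>
              if t.offsetAt p + l.numLeaves ≤ (k : ℕ) ∧
                (k : ℕ) < t.offsetAt p + l.numLeaves + r.numLeaves
              then (1 : ℚ) else 0)
              = (fun k : Fin t.numLeaves =>
                  if t.offsetAt p ≤ (k : ℕ) ∧ (k : ℕ) < t.offsetAt p + (BTree.node l r).numLeaves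
                  then (1 : ℚ) else 0) -
                (fun k : Fin t.numLeaves =>
                  if t.offsetAt p ≤ (k : ℕ) ∧ (k : ℕ) < t.offsetAt p + l.numLeaves
                  then (1 : ℚ) else 0) := by
            funext k
            simp only [Pi.sub_apply, BTree.numLeaves]
            split_ifs <;> first | (exfalso; omega) | norm_num <;> grind
          rw [heq]; exact hmem
        have hsl : t.subtreeAt? (p ++ [false]) = some l := by
          rw [BTree.subtreeAt?_append, hp]; simp [BTree.subtreeAt?]
        have hsr : t.subtreeAt? (p ++ [true]) = some r := by
          rw [BTree.subtreeAt?_append, hp]; simp [BTree.subtreeAt?]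
        have hol : t.offsetAt (p ++ [false]) = t.offsetAt p := by
          rw [BTree.offsetAt_append t p [false] _ hp]
          simp [BTree.offsetAt]
        have hor : t.offsetAt (p ++ [true]) = t.offsetAt p + l.numLeaves := by
          rw [BTree.offsetAt_append t p [true] _ hp]
          simp [BTree.offsetAt]
        by_cases hc : i < t.offsetAt p + l.numLeaves
        · exact ihl (p ++ [false]) hsl (by rw [hol]; exact hleft) i (by omega) (by omega)
        · exact ihr (p ++ [true]) hsr (by rw [hor]; exact hright) i (by omega) (by omega)
  -- apply at the root to get every standard basis vector
  have hbasis : ∀ i : Fin t.numLeaves, Pi.single i (1 : ℚ) ∈ R := by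
    intro i
    have hroot : t.subtreeAt? [] = some t := by cases t <;> rfl
    have hoff : t.offsetAt [] = 0 := by cases t <;> rfl
    have hchi : (fun k : Fin t.numLeaves =>
        if t.offsetAt [] ≤ (k : ℕ) ∧ (k : ℕ) < t.offsetAt [] + t.numLeaves
        then (1 : ℚ) else 0) ∈ R := by
      have heq : (fun k : Fin t.numLeaves =>
          if t.offsetAt [] ≤ (k : ℕ) ∧ (k : ℕ) < t.offsetAt [] + t.numLeaves
          then (1 : ℚ) else 0) = fun _ : Fin t.numLeaves => (1 : ℚ) := by
        funext k
        rw [if_pos ⟨by omega, by rw [hoff]; simpa using k.isLt⟩]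
      rw [heq]; exact hone
    have := key t [] hroot hchi (i : ℕ) (by omega) (by rw [hoff]; simpa using i.isLt)
    have heq : (fun k : Fin t.numLeaves => if (k : ℕ) = (i : ℕ) then (1 : ℚ) else 0)
        = Pi.single i (1 : ℚ) := by
      funext k
      rw [Pi.single_apply]
      simp [Fin.ext_iff]
    rw [heq] at this
    exact this
  -- hence mulVec is surjective
  have hsurj : Function.Surjective M.mulVec := by
    intro v
    have hv : v ∈ R := by
      rw [← Finset.univ_sum_single v]
      refine Submodule.sum_mem _ (fun i _ => ?_)
      have h1 : Pi.single i (v i) = v i • (Pi.single i (1 : ℚ) : Fin t.numLeaves → ℚ) := by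
        funext k
        simp only [Pi.smul_apply, Pi.single_apply, smul_eq_mul]
        split_ifs <;> simp
      rw [h1]
      exact Submodule.smul_mem _ _ (hbasis i)
    obtain ⟨x, hx⟩ := hv
    exact ⟨x, hx⟩
  have hunit : IsUnit M := Matrix.mulVec_surjective_iff_isUnit.mp hsurj
  exact ((Matrix.isUnit_iff_isUnit_det M).mp hunit).ne_zero
end

section
/- Let B be an L × m matrix with entries in {0,1} and h ∈ {0,1}^m. If B' is obtained from B by replacing every entry 1 by a fixed positive real c and every entry 0 by a fixed nonpositive real d ≤ 0, and if the vector B h (over ℤ) has a unique maximum at index j attained with (Bh)(j) = Σᵢ h(i) (i.e., row j of B has 1's at every position where h is 1), then the first index of the maximum of B' h equals j. -/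
/-- The first (smallest) index at which a vector `v ∈ ℝ^L` attains its maximum. -/
noncomputable def argmaxFst {L : ℕ} [NeZero L] (v : Fin L → ℝ) : Fin L :=
  (Finset.univ.filter fun j => v j = Finset.univ.sup' ⟨0, Finset.mem_univ 0⟩ v).min' (by
    obtain ⟨i, _, hi⟩ := Finset.exists_mem_eq_sup'
      (⟨0, Finset.mem_univ 0⟩ : (Finset.univ (α := Fin L)).Nonempty) v
    exact ⟨i, Finset.mem_filter.mpr ⟨Finset.mem_univ i, hi.symm⟩⟩)

/-! Row `j` of the 0-1 matrix `B` collects `c` at every position of the support of `h`, while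
any other row pays at least once `d < c` there; elsewhere `h` vanishes. So `j` is a strict
maximum of `B' h`, and a strict maximum is in particular the first index of the maximum. -/

open Finset

theorem argmaxFst_eq_of_forall_lt {L : ℕ} [NeZero L] {v : Fin L → ℝ} {j : Fin L}
    (hj : ∀ k, k ≠ j → v k < v j) : argmaxFst v = j := by
  have hle : ∀ k, v k ≤ v j := fun k => by
    rcases eq_or_ne k j with rfl | hk
    exacts [le_rfl, (hj k hk).le]
  have hsup : univ.sup' ⟨0, mem_univ 0⟩ v = v j :=
    le_antisymm (sup'_le _ _ fun k _ => hle k) (le_sup' v (mem_univ j))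
  have hmax : univ.filter (fun k => v k = univ.sup' ⟨0, mem_univ 0⟩ v) = {j} := by
    ext k
    simp only [hsup, mem_filter, mem_univ, true_and, mem_singleton]
    exact ⟨fun hk => by_contra fun hkj => (hj k hkj).ne hk, fun hk => hk ▸ rfl⟩
  unfold argmaxFst
  simp only [hmax, min'_singleton]

theorem mulVec_apply_lt_of_not_covers {κ ι : Type*} [Fintype ι]
    {B B' : Matrix κ ι ℝ} {h : ι → ℝ} (hh : ∀ i, h i = 0 ∨ h i = 1) {c d : ℝ} (hdc : d < c)
    (hB' : ∀ k i, B' k i = if B k i = 1 then c else d)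
    {j : κ} (hj : ∀ i, h i = 1 → B j i = 1) {k : κ} {i₀ : ι} (hi₀ : h i₀ = 1)
    (hk : B k i₀ ≠ 1) : B'.mulVec h k < B'.mulVec h j := by
  simp only [Matrix.mulVec, dotProduct]
  refine sum_lt_sum (fun i _ => ?_) ⟨i₀, mem_univ i₀, ?_⟩
  · rcases hh i with h0 | h1
    · simp [h0]
    · rw [h1, mul_one, mul_one, hB' j, if_pos (hj i h1), hB' k]
      split_ifs <;> linarith
  · rw [hi₀, mul_one, mul_one, hB' j, if_pos (hj i₀ hi₀), hB' k, if_neg hk]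
    exact hdc

theorem stmt15_general {L m : ℕ} [NeZero L]
    (B : Matrix (Fin L) (Fin m) ℝ)
    (h : Fin m → ℝ) (hh : ∀ i, h i = 0 ∨ h i = 1)
    (c d : ℝ) (hc : 0 < c) (hd : d ≤ 0)
    (B' : Matrix (Fin L) (Fin m) ℝ)
    (hB' : ∀ k i, B' k i = if B k i = 1 then c else d)
    (j : Fin L) (hj : ∀ i, h i = 1 → B j i = 1)
    (huniq : ∀ k, (∀ i, h i = 1 → B k i = 1) → k = j) :
    argmaxFst (B'.mulVec h) = j := by
  refine argmaxFst_eq_of_forall_lt fun k hk => ?_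
  obtain ⟨i₀, hi₀, hBk⟩ : ∃ i, h i = 1 ∧ B k i ≠ 1 := by
    by_contra! hcovers
    exact hk (huniq k hcovers)
  exact mulVec_apply_lt_of_not_covers hh (hd.trans_lt hc) hB' hj hi₀ hBk

/-- Replacing the 1's of a 0-1 matrix `B` by a positive constant `c` and its 0's
by a nonpositive constant `d`: if `h ∈ {0,1}^m` is nonzero and `j` is the unique
row of `B` having 1's at every position of the support of `h`, then the first
index of the maximum of `B' h` is `j`. -/
theorem stmt15 {L m : ℕ} [NeZero L]
    (B : Matrix (Fin L) (Fin m) ℝ) (hB : ∀ k i, B k i = 0 ∨ B k i = 1)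
    (h : Fin m → ℝ) (hh : ∀ i, h i = 0 ∨ h i = 1) (hne : h ≠ 0)
    (c d : ℝ) (hc : 0 < c) (hd : d ≤ 0)
    (B' : Matrix (Fin L) (Fin m) ℝ)
    (hB' : ∀ k i, B' k i = if B k i = 1 then c else d)
    (j : Fin L) (hj : ∀ i, h i = 1 → B j i = 1)
    (huniq : ∀ k, (∀ i, h i = 1 → B k i = 1) → k = j) :
    argmaxFst (B'.mulVec h) = j :=
  stmt15_general B h hh c d hc hd B' hB' j hj huniq
end
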